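/- arXiv:1001.2474 — 2 statements merged into one kernel-verified Lean document; each statement's English description precedes it below -/
import Mathlib

section
/- Under the binomial initial condition, the solutions of the two deterministic Hodgkin–Huxley-type systems coincide: if (V,u) solves V' = f(V, u^k), u' = (1-u)α(V) - u β(V) with V(0)=V₀, u(0)=u₀, and (V̂, x₀,...,x_k) solves V̂' = f(V̂, x_k), x_j' = (k-j+1)x_{j-1}α(V̂) + (j+1)x_{j+1}β(V̂) - x_j(j β(V̂) + (k-j)α(V̂)) for 0≤j≤k (with x_{-1}=x_{k+1}=0), with V̂(0)=V₀ and x_{k-j}(0) = C(k,j) u₀^(k-j) (1-u₀)^j for all 0≤j≤k, then for all t ≥ 0: V(t) = V̂(t) and x_{k-j}(t) = C(k,j) u(t)^(k-j) (1-u(t))^j for all 0≤j≤k; in particular the proportion of open channels satisfies x_k(t) = u(t)^k. -/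
/-- The multistate kinetic system (A.2) of Appendix A. -/
def SolvesMultistate (k : ℕ) (f : ℝ → ℝ → ℝ) (α β : ℝ → ℝ)
    (W : ℝ → ℝ) (y : ℕ → ℝ → ℝ) : Prop :=
  (∀ t, HasDerivAt W (f (W t) (y k t)) t) ∧
  ∀ j ≤ k, ∀ t, HasDerivAt (y j)
    ((if 1 ≤ j then ((k : ℝ) - j + 1) * y (j - 1) t * α (W t) else 0)
     + (if j + 1 ≤ k then ((j : ℝ) + 1) * y (j + 1) t * β (W t) else 0)
     - y j t * ((j : ℝ) * β (W t) + ((k : ℝ) - j) * α (W t))) t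

/-!
If `u` solves the two-state gating equation, the binomial weights `C(k,j) u^j (1-u)^(k-j)`
(the law of the number of open gates among `k` independent ones, i.e. the Bernstein basis
polynomials evaluated at `u`) solve the multistate kinetic equations, driven by the same
potential `V` because the all-open weight is `u^k`. They start from the binomial initial data,
so uniqueness for the multistate system identifies the two solutions.
-/

open Polynomial

theorem natCast_mul_pow_sub_one_mul {R : Type*} [Semiring R] (n : ℕ) (p : R) :
    (n : R) * p ^ (n - 1) * p = n * p ^ n := by
  cases n <;> simp [pow_succ, mul_assoc]

section

variable {R : Type*} [CommRing R]

theorem Nat.cast_sub_add_one_mul_choose_sub_one {k j : ℕ} (h1 : 1 ≤ j) (hj : j ≤ k) :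
    ((k : R) - j + 1) * k.choose (j - 1) = j * k.choose j := by
  have h := Nat.choose_succ_right_eq k (j - 1)
  rw [Nat.sub_add_cancel h1] at h
  have hR : ((k.choose j * j : ℕ) : R) = ((k.choose (j - 1) * (k - (j - 1)) : ℕ) : R) :=
    congrArg _ h
  push_cast [Nat.cast_sub (by omega : j - 1 ≤ k), Nat.cast_sub h1] at hR
  linear_combination -hR

theorem Nat.cast_add_one_mul_choose_add_one {k j : ℕ} (hj : j ≤ k) :
    ((j : R) + 1) * k.choose (j + 1) = ((k : R) - j) * k.choose j := by
  have hR : ((k.choose (j + 1) * (j + 1) : ℕ) : R) = ((k.choose j * (k - j) : ℕ) : R) :=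
    congrArg _ (Nat.choose_succ_right_eq k j)
  push_cast [Nat.cast_sub hj] at hR
  linear_combination hR

theorem bernsteinPolynomial.eval_eq (k j : ℕ) (p : R) :
    (bernsteinPolynomial R k j).eval p = k.choose j * p ^ j * (1 - p) ^ (k - j) := by
  simp [bernsteinPolynomial]

theorem bernsteinPolynomial.eval_sub_eq {k j : ℕ} (hj : j ≤ k) (p : R) :
    (bernsteinPolynomial R k (k - j)).eval p = k.choose j * p ^ (k - j) * (1 - p) ^ j := by
  rw [eval_eq, Nat.choose_symm hj, Nat.sub_sub_self hj]

end

theorem hasDerivAt_bernsteinPolynomial_eval_comp {u : ℝ → ℝ} {a b t : ℝ}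
    (hu : HasDerivAt u ((1 - u t) * a - u t * b) t) {k j : ℕ} (hj : j ≤ k) :
    HasDerivAt (fun s => (bernsteinPolynomial ℝ k j).eval (u s))
      ((if 1 ≤ j then ((k : ℝ) - j + 1) * (bernsteinPolynomial ℝ k (j - 1)).eval (u t) * a
          else 0)
        + (if j + 1 ≤ k then ((j : ℝ) + 1) * (bernsteinPolynomial ℝ k (j + 1)).eval (u t) * b
          else 0)
        - (bernsteinPolynomial ℝ k j).eval (u t) * ((j : ℝ) * b + ((k : ℝ) - j) * a)) t := by
  set p := u t
  -- no separate boundary cases: where an `if` is `0`, so is the factor `j`, resp. `k - j`, below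
  have gain : (if 1 ≤ j then ((k : ℝ) - j + 1) * (bernsteinPolynomial ℝ k (j - 1)).eval p * a
      else 0) = j * k.choose j * p ^ (j - 1) * (1 - p) ^ (k - j + 1) * a := by
    split_ifs with h1
    · rw [bernsteinPolynomial.eval_eq, show k - (j - 1) = k - j + 1 by omega,
        ← Nat.cast_sub_add_one_mul_choose_sub_one h1 hj]
      ring
    · simp [show j = 0 by omega]
  have loss : (if j + 1 ≤ k then ((j : ℝ) + 1) * (bernsteinPolynomial ℝ k (j + 1)).eval p * b
      else 0) = ((k : ℝ) - j) * k.choose j * p ^ (j + 1) * (1 - p) ^ (k - j - 1) * b := by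
    split_ifs with h1
    · rw [bernsteinPolynomial.eval_eq, Nat.sub_add_eq]
      linear_combination (p ^ (j + 1) * (1 - p) ^ (k - j - 1) * b) *
        Nat.cast_add_one_mul_choose_add_one (R := ℝ) hj
    · simp [show j = k by omega]
  have hderiv := ((hu.fun_pow j).const_mul (k.choose j : ℝ)).fun_mul
    ((hu.const_sub 1).fun_pow (k - j))
  have hp := natCast_mul_pow_sub_one_mul j p
  have hq := natCast_mul_pow_sub_one_mul (k - j) (1 - p)
  push_cast [Nat.cast_sub hj] at hderiv hq
  simp only [bernsteinPolynomial.eval_eq] at gain loss ⊢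
  rw [gain, loss]
  refine hderiv.congr_deriv ?_
  linear_combination -(k.choose j * (1 - p) ^ (k - j) * b) * hp - (k.choose j * p ^ j * a) * hq

theorem solvesMultistate_bernsteinPolynomial {k : ℕ} {f : ℝ → ℝ → ℝ} {α β : ℝ → ℝ}
    {V u : ℝ → ℝ} (hV : ∀ t, HasDerivAt V (f (V t) (u t ^ k)) t)
    (hu : ∀ t, HasDerivAt u ((1 - u t) * α (V t) - u t * β (V t)) t) :
    SolvesMultistate k f α β V fun j t => (bernsteinPolynomial ℝ k j).eval (u t) :=
  ⟨fun t => by simpa [bernsteinPolynomial.eval_eq] using hV t,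
    fun _ hj t => hasDerivAt_bernsteinPolynomial_eval_comp (hu t) hj⟩

theorem two_state_multistate_equivalence_general
    (k : ℕ) (f : ℝ → ℝ → ℝ) (α β : ℝ → ℝ)
    (V₀ u₀ : ℝ)
    (V u : ℝ → ℝ)
    (hV : ∀ t, HasDerivAt V (f (V t) (u t ^ k)) t)
    (hu : ∀ t, HasDerivAt u ((1 - u t) * α (V t) - u t * β (V t)) t)
    (hV0 : V 0 = V₀) (hu0 : u 0 = u₀)
    (Vh : ℝ → ℝ) (x : ℕ → ℝ → ℝ)
    (hsol : SolvesMultistate k f α β Vh x)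
    (hVh0 : Vh 0 = V₀)
    (hx0 : ∀ j ≤ k, x (k - j) 0 = (k.choose j : ℝ) * u₀ ^ (k - j) * (1 - u₀) ^ j)
    (huniq : ∀ (W W' : ℝ → ℝ) (y y' : ℕ → ℝ → ℝ),
      SolvesMultistate k f α β W y → SolvesMultistate k f α β W' y' →
      W 0 = W' 0 → (∀ j ≤ k, y j 0 = y' j 0) →
      ∀ t : ℝ, 0 ≤ t → W t = W' t ∧ ∀ j ≤ k, y j t = y' j t) :
    ∀ t : ℝ, 0 ≤ t →
      V t = Vh t ∧
      (∀ j ≤ k, x (k - j) t = (k.choose j : ℝ) * u t ^ (k - j) * (1 - u t) ^ j) ∧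
      x k t = u t ^ k := by
  have hy0 : ∀ j ≤ k, (bernsteinPolynomial ℝ k j).eval (u 0) = x j 0 := fun j hj => by
    have h := hx0 (k - j) (Nat.sub_le k j)
    rw [← bernsteinPolynomial.eval_sub_eq (Nat.sub_le k j), Nat.sub_sub_self hj] at h
    rw [h, hu0]
  intro t ht
  obtain ⟨hVt, hxt⟩ := huniq V Vh _ x (solvesMultistate_bernsteinPolynomial hV hu) hsol
    (hV0.trans hVh0.symm) hy0 t ht
  refine ⟨hVt, fun j hj => ?_, ?_⟩
  · rw [← hxt (k - j) (Nat.sub_le k j), bernsteinPolynomial.eval_sub_eq hj]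
  · simpa [bernsteinPolynomial.eval_eq] using (hxt k le_rfl).symm

/-- Appendix A Proposition: under binomial initial conditions, the two-state gating
model and the multistate kinetic model produce the same potential, and the
proportion of open channels is `u^k`. -/
theorem two_state_multistate_equivalence
    (k : ℕ) (hk : 1 ≤ k) (f : ℝ → ℝ → ℝ) (α β : ℝ → ℝ)
    (hα : ∀ x, 0 ≤ α x) (hβ : ∀ x, 0 ≤ β x)
    (V₀ u₀ : ℝ) (hu₀ : u₀ ∈ Set.Icc (0 : ℝ) 1)
    (V u : ℝ → ℝ)
    (hV : ∀ t, HasDerivAt V (f (V t) (u t ^ k)) t)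
    (hu : ∀ t, HasDerivAt u ((1 - u t) * α (V t) - u t * β (V t)) t)
    (hV0 : V 0 = V₀) (hu0 : u 0 = u₀)
    (Vh : ℝ → ℝ) (x : ℕ → ℝ → ℝ)
    (hsol : SolvesMultistate k f α β Vh x)
    (hVh0 : Vh 0 = V₀)
    (hx0 : ∀ j ≤ k, x (k - j) 0 = (k.choose j : ℝ) * u₀ ^ (k - j) * (1 - u₀) ^ j)
    (huniq : ∀ (W W' : ℝ → ℝ) (y y' : ℕ → ℝ → ℝ),
      SolvesMultistate k f α β W y → SolvesMultistate k f α β W' y' →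
      W 0 = W' 0 → (∀ j ≤ k, y j 0 = y' j 0) →
      ∀ t : ℝ, 0 ≤ t → W t = W' t ∧ ∀ j ≤ k, y j t = y' j t) :
    ∀ t : ℝ, 0 ≤ t →
      V t = Vh t ∧
      (∀ j ≤ k, x (k - j) t = (k.choose j : ℝ) * u t ^ (k - j) * (1 - u t) ^ j) ∧
      x k t = u t ^ k :=
  two_state_multistate_equivalence_general k f α β V₀ u₀ V u hV hu hV0 hu0 Vh x hsol hVh0 hx0 huniq
end

section
/- Let J = [[b'_u, b'_v],[f'_u, f'_v]] be a real 2×2 matrix with eigenvalues λ₁, λ₂ (counted with multiplicity, possibly complex), and let M be the 3×3 matrix M = [[2b'_u, 0, b'_v],[0, 2f'_v, f'_u],[2f'_u, 2b'_v, b'_u+f'_v]]. Then the spectrum of M (over ℂ) is {2λ₁, 2λ₂, λ₁+λ₂}, i.e., the characteristic polynomial of M equals (X − 2λ₁)(X − 2λ₂)(X − (λ₁+λ₂)). -/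
open Polynomial Matrix

/-- Section 3.4: if `J` has eigenvalues `λ₁, λ₂`, then the moment-equation matrix
`M` has spectrum `{2λ₁, 2λ₂, λ₁+λ₂}`. -/
theorem moment_matrix_spectrum
    (bu bv fu fv : ℝ) (l₁ l₂ : ℂ)
    (htr : l₁ + l₂ = (bu : ℂ) + (fv : ℂ))
    (hdet : l₁ * l₂ = (bu : ℂ) * fv - (bv : ℂ) * fu) :
    (((!![2*bu, 0, bv; 0, 2*fv, fu; 2*fu, 2*bv, bu+fv] : Matrix (Fin 3) (Fin 3) ℝ).map
        ((↑) : ℝ → ℂ)).charpoly)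
      = (X - C (2 * l₁)) * (X - C (2 * l₂)) * (X - C (l₁ + l₂)) := by
  have h1 : (C l₁ + C l₂ : ℂ[X]) = C (bu:ℂ) + C (fv:ℂ) := by
    rw [← C_add, ← C_add, htr]
  have h2 : (C l₁ * C l₂ : ℂ[X]) = C (bu:ℂ) * C (fv:ℂ) - C (bv:ℂ) * C (fu:ℂ) := by
    rw [← C_mul, ← C_mul, ← C_mul, ← C_sub, hdet]
  simp only [Matrix.charpoly, Matrix.det_fin_three, charmatrix_apply, Matrix.map_apply,
    Matrix.cons_val', Matrix.cons_val_zero, Matrix.cons_val_one, Matrix.head_cons,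
    Matrix.cons_val_two, Matrix.tail_cons, Matrix.head_fin_const, Matrix.empty_val', Matrix.cons_val_fin_one, Matrix.of_apply,
    Matrix.one_apply, if_pos, Fin.isValue, scalar_apply, diagonal_apply]
  push_cast
  simp only [C_add, C_mul, map_ofNat, C_0]
  linear_combination (3*(X:ℂ[X])^2 - 2*(C l₁ + C l₂ + C (bu:ℂ) + C (fv:ℂ))*X + 4*C l₁*C l₂) * h1 + (4*(C (bu:ℂ) + C (fv:ℂ)) - 4*(X:ℂ[X])) * h2
end
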